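/- Condition characterization for abstraction: given Σ = Σ_c ⊎ Σ_u, a term s[k] with subterm k, the following are equivalent: (A) there exists a substitution θ such that s[k]θ is uncomputable and kθ is computable; (B) k is computable, and either s[k] is uncomputable, or s[k] contains a variable not occurring in k and there exists at least one uncomputable ground term (i.e., Σ_u is nonempty). -/

import Mathlib

/-- First-order terms over function symbols `F` and variables `V`. -/
inductive Term (F V : Type) : Type where
  | var : V → Term F V
  | app : F → List (Term F V) → Term F V

/-- All function symbols of the term belong to the set `S`. -/
inductive SymbolsIn {F V : Type} (S : Set F) : Term F V → Prop where
  | var (x : V) : SymbolsIn S (Term.var x)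
  | app {f : F} {ts : List (Term F V)} :
      f ∈ S → (∀ t ∈ ts, SymbolsIn S t) → SymbolsIn S (Term.app f ts)

/-- The variable `x` occurs in the term. -/
inductive VarInT {F V : Type} (x : V) : Term F V → Prop where
  | here : VarInT x (Term.var x)
  | arg {f : F} {ts : List (Term F V)} {t : Term F V} :
      t ∈ ts → VarInT x t → VarInT x (Term.app f ts)

/-- Applying a substitution to a term. -/
def applySubst {F V : Type} (σ : V → Term F V) : Term F V → Term F V
  | Term.var x => σ x
  | Term.app f ts => Term.app f (ts.attach.map fun t => applySubst σ t.1)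
decreasing_by
  have := List.sizeOf_lt_of_mem t.2
  simp only [Term.app.sizeOf_spec] at *
  omega

/-- One-hole contexts for terms: `s[·]`. -/
inductive Ctx (F V : Type) : Type where
  | hole : Ctx F V
  | app : F → List (Term F V) → Ctx F V → List (Term F V) → Ctx F V

/-- Filling the hole of a context with a term. -/
def Ctx.fill {F V : Type} : Ctx F V → Term F V → Term F V
  | Ctx.hole, u => u
  | Ctx.app f pre c post, u => Term.app f (pre ++ c.fill u :: post)

theorem Term.my_ind {F V : Type} {P : Term F V → Prop}
    (hv : ∀ x, P (Term.var x))
    (ha : ∀ f ts, (∀ t ∈ ts, P t) → P (Term.app f ts)) :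
    ∀ t, P t
  | Term.var x => hv x
  | Term.app f ts => ha f ts (fun t ht => Term.my_ind hv ha t)
decreasing_by
  have := List.sizeOf_lt_of_mem ht
  simp only [Term.app.sizeOf_spec] at *
  omega

lemma symbolsIn_app_iff {F V : Type} {S : Set F} {f : F} {ts : List (Term F V)} :
    SymbolsIn S (Term.app f ts) ↔ f ∈ S ∧ ∀ t ∈ ts, SymbolsIn S t := by
  constructor
  · intro h; cases h with | app hf h => exact ⟨hf, h⟩
  · rintro ⟨hf, h⟩; exact SymbolsIn.app hf h

lemma varInT_var_iff {F V : Type} {x y : V} :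
    VarInT (F := F) x (Term.var y) ↔ x = y := by
  constructor
  · intro h; cases h; rfl
  · rintro rfl; exact VarInT.here

lemma varInT_app_iff {F V : Type} {x : V} {f : F} {ts : List (Term F V)} :
    VarInT x (Term.app f ts) ↔ ∃ t ∈ ts, VarInT x t := by
  constructor
  · intro h; cases h with | arg ht hx => exact ⟨_, ht, hx⟩
  · rintro ⟨t, ht, hx⟩; exact VarInT.arg ht hx

lemma applySubst_app {F V : Type} (σ : V → Term F V) (f : F) (ts : List (Term F V)) :
    applySubst σ (Term.app f ts) = Term.app f (ts.map (applySubst σ)) := by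
  rw [applySubst]
  congr 1
  exact List.attach_map_val (l := ts) (f := applySubst σ)

lemma applySubst_var_id {F V : Type} (t : Term F V) :
    applySubst Term.var t = t := by
  induction t using Term.my_ind with
  | hv x => rw [applySubst]
  | ha f ts ih =>
    rw [applySubst_app]
    congr 1
    exact (List.map_congr_left ih).trans (List.map_id ts)

lemma symbolsIn_applySubst {F V : Type} {S : Set F} (σ : V → Term F V) (t : Term F V) :
    SymbolsIn S (applySubst σ t) ↔
      SymbolsIn S t ∧ ∀ x, VarInT x t → SymbolsIn S (σ x) := by
  induction t using Term.my_ind with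
  | hv x =>
    rw [show applySubst σ (Term.var x) = σ x from by rw [applySubst]]
    constructor
    · intro h; exact ⟨SymbolsIn.var x, fun y hy => by rwa [varInT_var_iff.mp hy]⟩
    · rintro ⟨-, h⟩; exact h x VarInT.here
  | ha f ts ih =>
    rw [applySubst_app, symbolsIn_app_iff, symbolsIn_app_iff]
    constructor
    · rintro ⟨hf, h⟩
      refine ⟨⟨hf, fun t ht => ?_⟩, fun x hx => ?_⟩
      · exact ((ih t ht).mp (h _ (List.mem_map_of_mem ht))).1
      · obtain ⟨t, ht, hxt⟩ := varInT_app_iff.mp hx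
        exact ((ih t ht).mp (h _ (List.mem_map_of_mem ht))).2 x hxt
    · rintro ⟨⟨hf, h⟩, hx⟩
      refine ⟨hf, fun t' ht' => ?_⟩
      obtain ⟨t, ht, rfl⟩ := List.mem_map.mp ht'
      exact (ih t ht).mpr ⟨h t ht, fun x hxt => hx x (varInT_app_iff.mpr ⟨t, ht, hxt⟩)⟩

lemma symbolsIn_of_univ {F V : Type} {S : Set F} (hS : ∀ f, f ∈ S) (t : Term F V) :
    SymbolsIn S t := by
  induction t using Term.my_ind with
  | hv x => exact SymbolsIn.var x
  | ha f ts ih => exact SymbolsIn.app (hS f) ih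

/-- Characterization of the abstraction condition: for
`Σ = Σc ⊎ Σu`, a term `s[k]` with subterm occurrence `k`, the following are
equivalent: (A) there is a substitution `θ` such that `s[k]θ` is uncomputable
and `kθ` is computable; (B) `k` is computable and either `s[k]` is
uncomputable, or `s[k]` contains a variable not occurring in `k` and there
exists at least one uncomputable ground term. -/
theorem abstraction_condition_iff {F V : Type}
    (Sc Su : Set F) (hpart : ∀ f, f ∈ Sc ↔ f ∉ Su)
    (s : Ctx F V) (k : Term F V) :
    (∃ θ : V → Term F V,
        ¬ SymbolsIn Sc (applySubst θ (s.fill k)) ∧ SymbolsIn Sc (applySubst θ k))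
    ↔
    (SymbolsIn Sc k ∧
      (¬ SymbolsIn Sc (s.fill k) ∨
        ((∃ x : V, VarInT x (s.fill k) ∧ ¬ VarInT x k) ∧
          ∃ u : Term F V, (∀ z : V, ¬ VarInT z u) ∧ ¬ SymbolsIn Sc u))) := by
  classical
  constructor
  · rintro ⟨θ, hs, hk⟩
    obtain ⟨hkc, hkθ⟩ := (symbolsIn_applySubst θ k).mp hk
    refine ⟨hkc, ?_⟩
    by_cases hsc : SymbolsIn Sc (s.fill k)
    · right
      have : ¬ ∀ x, VarInT x (s.fill k) → SymbolsIn Sc (θ x) := by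
        intro h
        exact hs ((symbolsIn_applySubst θ (s.fill k)).mpr ⟨hsc, h⟩)
      push_neg at this
      obtain ⟨x, hx, hxθ⟩ := this
      have hxk : ¬ VarInT x k := fun h => hxθ (hkθ x h)
      -- extract an uncomputable symbol
      have : ∃ f : F, f ∉ Sc := by
        by_contra h
        push_neg at h
        exact hxθ (symbolsIn_of_univ h (θ x))
      obtain ⟨f, hf⟩ := this
      refine ⟨⟨x, hx, hxk⟩, Term.app f [], fun z hz => ?_, fun h => ?_⟩
      · obtain ⟨t, ht, -⟩ := varInT_app_iff.mp hz
        simp at ht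
      · exact hf (symbolsIn_app_iff.mp h).1
    · left; exact hsc
  · rintro ⟨hkc, hsc | ⟨⟨x, hx, hxk⟩, u, hu, huc⟩⟩
    · refine ⟨Term.var, ?_, ?_⟩ <;> rw [applySubst_var_id]
      · exact hsc
      · exact hkc
    · refine ⟨fun y => if y = x then u else Term.var y, ?_, ?_⟩
      · intro h
        have := ((symbolsIn_applySubst _ (s.fill k)).mp h).2 x hx
        simp only [if_pos rfl] at this
        exact huc this
      · refine (symbolsIn_applySubst _ k).mpr ⟨hkc, fun y hy => ?_⟩
        have : y ≠ x := fun h => hxk (h ▸ hy)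
        simp only [if_neg this]
        exact SymbolsIn.var y
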